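/- arXiv:gr-qc/0512134 — 4 statements merged into one kernel-verified Lean document; each statement's English description precedes it below -/
import Mathlib

section
/- Let g : [0,1] → ℝ be continuous, and for ρ ∈ [0,1) define F(ρ) = ∫_ρ^1 g(t)/sqrt(t² - ρ²) dt. Then for every t ∈ [0,1), ∫_t^1 ρ F(ρ)/sqrt(ρ² - t²) dρ = (π/2) ∫_t^1 g(s) ds. -/
/-!
Both sides are integrals over the triangle `t < ρ < s ≤ 1` of `g(s)` against the kernel
`ρ / (√(ρ² - t²) √(s² - ρ²))`, integrated first in `s` on the left. Integrating first in `ρ`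
instead (Fubini, justified by the positivity of the kernel), the inner integral
`∫_t^s ρ dρ / (√(ρ² - t²) √(s² - ρ²))` equals `π/2` for every `s > t`: substituting
`ρ² = ((s² + t²) + (s² - t²) sin 2θ) / 2` turns it into `∫_{-π/4}^{π/4} dθ`.
-/

open Set MeasureTheory Real Function

theorem integral_Ioo_integral_Ioc_swap {E : Type*} [NormedAddCommGroup E] [NormedSpace ℝ E]
    {a b : ℝ} {f : ℝ → ℝ → E}
    (hf : AEStronglyMeasurable (uncurry f) (volume.restrict (Ioo a b ×ˢ Ioc a b)))
    (hf_int : ∀ s ∈ Ioc a b, IntegrableOn (fun ρ ↦ f ρ s) (Ioo a s))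
    (hf_norm : IntegrableOn (fun s ↦ ∫ ρ in Ioo a s, ‖f ρ s‖) (Ioc a b)) :
    ∫ ρ in Ioo a b, ∫ s in Ioc ρ b, f ρ s = ∫ s in Ioc a b, ∫ ρ in Ioo a s, f ρ s := by
  set f' : ℝ → ℝ → E := fun ρ s ↦ if ρ < s then f ρ s else 0
  have hsection_fst (ρ : ℝ) : f' ρ = (Ioi ρ).indicator (f ρ) := by
    ext s; simp [f', indicator_apply]
  have hsection_snd (ρ s : ℝ) : f' ρ s = (Iio s).indicator (fun ρ ↦ f ρ s) ρ := by
    simp [f', indicator_apply]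
  have hIoo_inter {s : ℝ} (hs : s ∈ Ioc a b) : Ioo a b ∩ Iio s = Ioo a s := by
    rw [Ioo_inter_Iio, min_eq_right hs.2]
  have hf' : AEStronglyMeasurable (uncurry f')
      ((volume.restrict (Ioo a b)).prod (volume.restrict (Ioc a b))) := by
    rw [Measure.prod_restrict]
    refine (hf.indicator (measurableSet_lt measurable_fst measurable_snd)).congr ?_
    refine .of_forall fun p ↦ ?_
    simp [f', indicator_apply, uncurry_def]
  have hf'_int : Integrable (uncurry f')
      ((volume.restrict (Ioo a b)).prod (volume.restrict (Ioc a b))) := by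
    refine (integrable_prod_iff' hf').mpr ⟨?_, ?_⟩
    · filter_upwards [ae_restrict_mem measurableSet_Ioc] with s hs
      simp_rw [uncurry_apply_pair, hsection_snd]
      rw [integrable_indicator_iff measurableSet_Iio, IntegrableOn,
        Measure.restrict_restrict measurableSet_Iio, inter_comm, hIoo_inter hs]
      exact hf_int s hs
    · refine hf_norm.congr ?_
      filter_upwards [ae_restrict_mem measurableSet_Ioc] with s hs
      simp_rw [uncurry_apply_pair, hsection_snd, norm_indicator_eq_indicator_norm]
      rw [setIntegral_indicator measurableSet_Iio, hIoo_inter hs]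
  calc ∫ ρ in Ioo a b, ∫ s in Ioc ρ b, f ρ s
      = ∫ ρ in Ioo a b, ∫ s in Ioc a b, f' ρ s := by
        refine setIntegral_congr_fun measurableSet_Ioo fun ρ hρ ↦ ?_
        rw [hsection_fst, setIntegral_indicator measurableSet_Ioi, Ioc_inter_Ioi,
          sup_eq_right.mpr hρ.1.le]
    _ = ∫ s in Ioc a b, ∫ ρ in Ioo a b, f' ρ s := integral_integral_swap hf'_int
    _ = ∫ s in Ioc a b, ∫ ρ in Ioo a s, f ρ s := by
        refine setIntegral_congr_fun measurableSet_Ioc fun s hs ↦ ?_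
        simp_rw [hsection_snd]
        rw [setIntegral_indicator measurableSet_Iio, hIoo_inter hs]

noncomputable def abelKernel (t s ρ : ℝ) : ℝ :=
  ρ / (√(ρ ^ 2 - t ^ 2) * √(s ^ 2 - ρ ^ 2))

noncomputable def abelKernelPrimitive (t s ρ : ℝ) : ℝ :=
  arcsin ((2 * ρ ^ 2 - s ^ 2 - t ^ 2) / (s ^ 2 - t ^ 2)) / 2

lemma continuous_abelKernelPrimitive (t s : ℝ) : Continuous (abelKernelPrimitive t s) := by
  unfold abelKernelPrimitive; fun_prop

lemma abelKernel_nonneg {t s ρ : ℝ} (ht : 0 ≤ t) (hρ : t < ρ) : 0 ≤ abelKernel t s ρ := by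
  unfold abelKernel; have := ht.trans hρ.le; positivity

lemma hasDerivAt_abelKernelPrimitive {t s ρ : ℝ} (ht : 0 ≤ t) (hρ : ρ ∈ Ioo t s) :
    HasDerivAt (abelKernelPrimitive t s) (abelKernel t s ρ) ρ := by
  obtain ⟨htρ, hρs⟩ := hρ
  have hρ0 : 0 < ρ := ht.trans_lt htρ
  have hA : 0 < ρ ^ 2 - t ^ 2 := by nlinarith
  have hB : 0 < s ^ 2 - ρ ^ 2 := by nlinarith
  have hC : 0 < s ^ 2 - t ^ 2 := by linarith
  set x := (2 * ρ ^ 2 - s ^ 2 - t ^ 2) / (s ^ 2 - t ^ 2)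
  have hx_lt : x < 1 := by rw [div_lt_one hC]; linarith
  have hx_gt : -1 < x := by rw [lt_div_iff₀ hC]; linarith
  have hsqrt : √(1 - x ^ 2) = 2 * √(ρ ^ 2 - t ^ 2) * √(s ^ 2 - ρ ^ 2) / (s ^ 2 - t ^ 2) := by
    rw [sqrt_eq_iff_eq_sq (by nlinarith) (by positivity), div_pow, div_pow, mul_pow, mul_pow,
      sq_sqrt hA.le, sq_sqrt hB.le]
    field_simp
    ring
  have hinner : HasDerivAt (fun ρ : ℝ => (2 * ρ ^ 2 - s ^ 2 - t ^ 2) / (s ^ 2 - t ^ 2))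
      (4 * ρ / (s ^ 2 - t ^ 2)) ρ := by
    refine ((((hasDerivAt_pow 2 ρ).const_mul 2).sub_const (s ^ 2)).sub_const (t ^ 2)).div_const
      (s ^ 2 - t ^ 2) |>.congr_deriv ?_
    norm_num
    ring
  refine ((hasDerivAt_arcsin hx_gt.ne' hx_lt.ne).comp ρ hinner).div_const 2 |>.congr_deriv ?_
  rw [hsqrt, abelKernel]
  field_simp
  ring

lemma integrableOn_abelKernel {t s : ℝ} (ht : 0 ≤ t) :
    IntegrableOn (abelKernel t s) (Ioc t s) :=
  intervalIntegral.integrableOn_deriv_of_nonneg (continuous_abelKernelPrimitive t s).continuousOn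
    (fun _ hρ ↦ hasDerivAt_abelKernelPrimitive ht hρ) (fun _ hρ ↦ abelKernel_nonneg ht hρ.1)

lemma integral_abelKernel {t s : ℝ} (ht : 0 ≤ t) (hts : t < s) :
    ∫ ρ in Ioo t s, abelKernel t s ρ = π / 2 := by
  have hC : s ^ 2 - t ^ 2 ≠ 0 := by nlinarith
  rw [← integral_Ioc_eq_integral_Ioo, ← intervalIntegral.integral_of_le hts.le,
    intervalIntegral.integral_eq_sub_of_hasDerivAt_of_le hts.le
      (continuous_abelKernelPrimitive t s).continuousOn
      (fun _ hρ ↦ hasDerivAt_abelKernelPrimitive ht hρ)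
      ((intervalIntegrable_iff_integrableOn_Ioc_of_le hts.le).mpr (integrableOn_abelKernel ht)),
    abelKernelPrimitive, abelKernelPrimitive]
  rw [show (2 * s ^ 2 - s ^ 2 - t ^ 2) / (s ^ 2 - t ^ 2) = 1 by field_simp; ring,
    show (2 * t ^ 2 - s ^ 2 - t ^ 2) / (s ^ 2 - t ^ 2) = -1 by field_simp; ring,
    arcsin_one, arcsin_neg_one]
  ring

theorem abel_inversion_formula {t b : ℝ} (ht : 0 ≤ t) {g : ℝ → ℝ}
    (hg : IntegrableOn g (Ioc t b)) :
    ∫ ρ in Ioo t b, ρ / √(ρ ^ 2 - t ^ 2) * ∫ s in Ioc ρ b, g s / √(s ^ 2 - ρ ^ 2) =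
      π / 2 * ∫ s in Ioc t b, g s := by
  have hmeas : AEStronglyMeasurable (uncurry fun ρ s ↦ g s * abelKernel t s ρ)
      (volume.restrict (Ioo t b ×ˢ Ioc t b)) := by
    rw [Measure.volume_eq_prod, ← Measure.prod_restrict]
    refine hg.aestronglyMeasurable.comp_snd.mul (Measurable.aestronglyMeasurable ?_)
    unfold abelKernel
    fun_prop
  have hint (s : ℝ) (hs : s ∈ Ioc t b) :
      IntegrableOn (fun ρ ↦ g s * abelKernel t s ρ) (Ioo t s) :=
    ((integrableOn_abelKernel ht).mono_set Ioo_subset_Ioc_self).const_mul _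
  have hnorm : IntegrableOn (fun s ↦ ∫ ρ in Ioo t s, ‖g s * abelKernel t s ρ‖) (Ioc t b) := by
    refine (hg.norm.mul_const (π / 2)).congr ?_
    filter_upwards [ae_restrict_mem measurableSet_Ioc] with s hs
    rw [← integral_abelKernel ht hs.1, ← integral_const_mul]
    refine setIntegral_congr_fun measurableSet_Ioo fun ρ hρ ↦ ?_
    rw [norm_mul, Real.norm_of_nonneg (abelKernel_nonneg ht hρ.1)]
  calc ∫ ρ in Ioo t b, ρ / √(ρ ^ 2 - t ^ 2) * ∫ s in Ioc ρ b, g s / √(s ^ 2 - ρ ^ 2)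
      = ∫ ρ in Ioo t b, ∫ s in Ioc ρ b, g s * abelKernel t s ρ := by
        congr 1; ext ρ
        rw [← integral_const_mul]
        congr 1; ext s
        rw [abelKernel]
        ring
    _ = ∫ s in Ioc t b, ∫ ρ in Ioo t s, g s * abelKernel t s ρ :=
        integral_Ioo_integral_Ioc_swap hmeas hint hnorm
    _ = ∫ s in Ioc t b, π / 2 * g s := by
        refine setIntegral_congr_fun measurableSet_Ioc fun s hs ↦ ?_
        rw [integral_const_mul, integral_abelKernel ht hs.1, mul_comm]
    _ = π / 2 * ∫ s in Ioc t b, g s := integral_const_mul _ _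

/-- Solution of the Abelian integral equation
`F(ρ) = ∫_ρ^1 g(t)/sqrt(t² - ρ²) dt`: for every `t ∈ [0,1)`,
`∫_t^1 ρ F(ρ)/sqrt(ρ² - t²) dρ = (π/2) ∫_t^1 g(s) ds`. -/
theorem abel_integral_equation_second_kind (g : ℝ → ℝ)
    (hcont : ContinuousOn g (Icc 0 1)) (F : ℝ → ℝ)
    (hF : ∀ ρ ∈ Ico (0:ℝ) 1, F ρ = ∫ t in ρ..(1:ℝ), g t / Real.sqrt (t ^ 2 - ρ ^ 2)) :
    ∀ t ∈ Ico (0:ℝ) 1,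
      ∫ ρ in t..(1:ℝ), ρ * F ρ / Real.sqrt (ρ ^ 2 - t ^ 2) =
        (Real.pi / 2) * ∫ s in t..(1:ℝ), g s := by
  rintro t ⟨ht0, ht1⟩
  have hg : IntegrableOn g (Ioc t 1) :=
    (hcont.mono (Icc_subset_Icc_left ht0)).integrableOn_Icc.mono_set Ioc_subset_Icc_self
  rw [intervalIntegral.integral_of_le ht1.le, intervalIntegral.integral_of_le ht1.le,
    integral_Ioc_eq_integral_Ioo, ← abel_inversion_formula ht0 hg]
  refine setIntegral_congr_fun measurableSet_Ioo fun ρ hρ ↦ ?_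
  rw [hF ρ ⟨ht0.trans hρ.1.le, hρ.2⟩, intervalIntegral.integral_of_le hρ.2.le]
  ring
end

section
/- Let q be real with q ≠ 0 and q² ≠ 1, and let M, J be nonzero real numbers. Starting from an uncharged solution (Q = 0, J_M = 0) with mass M and angular momentum J, the Harrison-transformed quantities M' = M(1+q²)/(1-q²), Q' = -2qM/(1-q²), J' = J(1+q²)/(1-q²), J_M' = -2qJ/(1-q²) satisfy J'Q' ≠ 0 and the gyromagnetic ratio g_M' := 2 M' J_M' / (J' Q') equals exactly 2. -/
/-- The Harrison transformation of an uncharged solution (`Q = 0`, `J_M = 0`)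
with nonzero mass `M` and angular momentum `J` yields `J'Q' ≠ 0` and a
gyromagnetic ratio `g_M' = 2 M' J_M' / (J' Q')` exactly equal to `2`. -/
theorem harrison_gyromagnetic_ratio_two (q M J : ℝ) (hq0 : q ≠ 0) (hq1 : q ^ 2 ≠ 1)
    (hM : M ≠ 0) (hJ : J ≠ 0) :
    (J * (1 + q ^ 2) / (1 - q ^ 2)) * (-2 * q * M / (1 - q ^ 2)) ≠ 0 ∧
    2 * (M * (1 + q ^ 2) / (1 - q ^ 2)) * (-2 * q * J / (1 - q ^ 2)) /
      ((J * (1 + q ^ 2) / (1 - q ^ 2)) * (-2 * q * M / (1 - q ^ 2))) = 2 := by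
  have h1 : (1 : ℝ) - q ^ 2 ≠ 0 := by
    intro h; apply hq1; linarith
  have h2 : (1 : ℝ) + q ^ 2 ≠ 0 := by positivity
  constructor
  · apply mul_ne_zero
    · exact div_ne_zero (mul_ne_zero hJ h2) h1
    · exact div_ne_zero (mul_ne_zero (mul_ne_zero (by norm_num) hq0) hM) h1
  · field_simp
end

section
/- Let m > 0, let q be real with 0 < q² < 1, and let s > 2m be a real number (representing r₊ + r₋). Set f = (s - 2m)/(s + 2m), b = 0, m' = m(1+q²)/(1-q²), and Q = -2mq/(1-q²). Then the Harrison-transformed potentials satisfy f' := (1-q²)² f / ((1-q²f)² ) = (s² - 4m²)/(s + 2m')², Φ' := -q(1-f)/(1-q²f) = 2Q/(s + 2m'), b' = 0, and moreover m'² - Q² = m². -/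
/-- The Harrison transformation of the Schwarzschild solution
(`f = (s - 2m)/(s + 2m)`, `b = 0`, with `s = r₊ + r₋ > 2m`) yields the
Reissner–Nordström solution with mass `m' = m(1+q²)/(1-q²)` and charge
`Q = -2mq/(1-q²)`, satisfying `m'² - Q² = m²`. -/
theorem harrison_schwarzschild_to_reissnerNordstrom (m q s : ℝ)
    (hm : 0 < m) (hq0 : 0 < q ^ 2) (hq1 : q ^ 2 < 1) (hs : 2 * m < s) :
    (1 - q ^ 2) ^ 2 * ((s - 2 * m) / (s + 2 * m)) /
        (1 - q ^ 2 * ((s - 2 * m) / (s + 2 * m))) ^ 2 =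
      (s ^ 2 - 4 * m ^ 2) / (s + 2 * (m * (1 + q ^ 2) / (1 - q ^ 2))) ^ 2 ∧
    -q * (1 - (s - 2 * m) / (s + 2 * m)) / (1 - q ^ 2 * ((s - 2 * m) / (s + 2 * m))) =
      2 * (-2 * m * q / (1 - q ^ 2)) / (s + 2 * (m * (1 + q ^ 2) / (1 - q ^ 2))) ∧
    (1 - q ^ 4) * 0 / (1 - q ^ 2 * ((s - 2 * m) / (s + 2 * m))) ^ 2 = 0 ∧
    (m * (1 + q ^ 2) / (1 - q ^ 2)) ^ 2 - (-2 * m * q / (1 - q ^ 2)) ^ 2 = m ^ 2 := by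
  have hsm : (0:ℝ) < s + 2 * m := by linarith
  have hq : (0:ℝ) < 1 - q ^ 2 := by linarith
  have hf1 : (s - 2 * m) / (s + 2 * m) < 1 := by rw [div_lt_one hsm]; linarith
  have hf0 : 0 ≤ (s - 2 * m) / (s + 2 * m) := div_nonneg (by linarith) hsm.le
  have hD : (0:ℝ) < 1 - q ^ 2 * ((s - 2 * m) / (s + 2 * m)) := by nlinarith
  have hE : (0:ℝ) < s + 2 * (m * (1 + q ^ 2) / (1 - q ^ 2)) := by
    have : 0 < m * (1 + q ^ 2) / (1 - q ^ 2) := by positivity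
    linarith
  refine ⟨?_, ?_, by simp, ?_⟩
  · rw [← mul_div_assoc, div_div, div_eq_div_iff (by positivity) (by positivity)]
    field_simp
    ring
  · rw [div_eq_div_iff hD.ne' hE.ne']
    field_simp
    ring
  · field_simp
    ring
end

section
/- Let κ > 0 and U_N < 0 be fixed real numbers. For λ ∈ (0, 1/κ), set q(λ)² = 1 - κλ, f(λ) = 1 + λ U_N, b = 0, and define the Harrison-transformed quantities f'(λ) = (1 - q(λ)²)² f(λ) / (1 - q(λ)² f(λ))² and Φ'(λ) = -q(λ)(1 - f(λ))/(1 - q(λ)² f(λ)) with q(λ) = sqrt(1 - κλ) > 0. Then as λ → 0⁺, f'(λ) → κ²/(κ - U_N)² and Φ'(λ) → U_N/(κ - U_N). -/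
open Filter

/-- Extreme Newtonian limit of the Harrison-transformed disk: with
`q(λ)² = 1 - κλ`, `f(λ) = 1 + λ U_N`, `b = 0`, as `λ → 0⁺` (within `(0, 1/κ)`)
the transformed potentials tend to `f' → κ²/(κ - U_N)²` and
`Φ' → U_N/(κ - U_N)`. -/
theorem harrison_extreme_newtonian_limit (κ U_N : ℝ) (hκ : 0 < κ) (hU : U_N < 0) :
    Tendsto (fun lam : ℝ =>
        (1 - Real.sqrt (1 - κ * lam) ^ 2) ^ 2 * (1 + lam * U_N) /
          (1 - Real.sqrt (1 - κ * lam) ^ 2 * (1 + lam * U_N)) ^ 2)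
      (nhdsWithin 0 (Set.Ioo 0 κ⁻¹)) (nhds (κ ^ 2 / (κ - U_N) ^ 2)) ∧
    Tendsto (fun lam : ℝ =>
        -Real.sqrt (1 - κ * lam) * (1 - (1 + lam * U_N)) /
          (1 - Real.sqrt (1 - κ * lam) ^ 2 * (1 + lam * U_N)))
      (nhdsWithin 0 (Set.Ioo 0 κ⁻¹)) (nhds (U_N / (κ - U_N))) := by
  have hD0 : κ - U_N ≠ 0 := by nlinarith
  -- simplified functions
  set g1 : ℝ → ℝ := fun lam => κ ^ 2 * (1 + lam * U_N) / (κ - U_N + κ * lam * U_N) ^ 2 with hg1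
  set g2 : ℝ → ℝ := fun lam =>
      Real.sqrt (1 - κ * lam) * U_N / (κ - U_N + κ * lam * U_N) with hg2
  have hmem : ∀ lam ∈ Set.Ioo (0:ℝ) κ⁻¹, Real.sqrt (1 - κ * lam) ^ 2 = 1 - κ * lam := by
    intro lam hlam
    apply Real.sq_sqrt
    have : κ * lam < 1 := by
      have := hlam.2
      calc κ * lam < κ * κ⁻¹ := by exact (mul_lt_mul_iff_right₀ hκ).2 this
        _ = 1 := mul_inv_cancel₀ hκ.ne'
    linarith
  have heq1 : Set.EqOn (fun lam : ℝ =>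
        (1 - Real.sqrt (1 - κ * lam) ^ 2) ^ 2 * (1 + lam * U_N) /
          (1 - Real.sqrt (1 - κ * lam) ^ 2 * (1 + lam * U_N)) ^ 2) g1 (Set.Ioo 0 κ⁻¹) := by
    intro lam hlam
    have hs := hmem lam hlam
    have hl : lam ≠ 0 := ne_of_gt hlam.1
    simp only [hs, hg1]
    have e1 : (1 - κ * lam) = 1 - κ * lam := rfl
    have e2 : (1 - (1 - κ * lam)) ^ 2 * (1 + lam * U_N) = lam ^ 2 * (κ ^ 2 * (1 + lam * U_N)) := by ring
    have e3 : (1 - (1 - κ * lam) * (1 + lam * U_N)) ^ 2 = lam ^ 2 * (κ - U_N + κ * lam * U_N) ^ 2 := by ring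
    rw [e2, e3, mul_div_mul_left _ _ (pow_ne_zero 2 hl)]
  have heq2 : Set.EqOn (fun lam : ℝ =>
        -Real.sqrt (1 - κ * lam) * (1 - (1 + lam * U_N)) /
          (1 - Real.sqrt (1 - κ * lam) ^ 2 * (1 + lam * U_N))) g2 (Set.Ioo 0 κ⁻¹) := by
    intro lam hlam
    have hs := hmem lam hlam
    have hl : lam ≠ 0 := ne_of_gt hlam.1
    simp only [hs, hg2]
    have e2 : -Real.sqrt (1 - κ * lam) * (1 - (1 + lam * U_N))
        = lam * (Real.sqrt (1 - κ * lam) * U_N) := by ring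
    have e3 : (1 - (1 - κ * lam) * (1 + lam * U_N)) = lam * (κ - U_N + κ * lam * U_N) := by ring
    rw [e2, e3, mul_div_mul_left _ _ hl]
  have hD0' : (κ - U_N + κ * (0:ℝ) * U_N) ≠ 0 := by simpa using hD0
  have hc1 : Tendsto g1 (nhdsWithin 0 (Set.Ioo 0 κ⁻¹)) (nhds (κ ^ 2 / (κ - U_N) ^ 2)) := by
    have : ContinuousAt g1 0 := by
      apply ContinuousAt.div
      · fun_prop
      · fun_prop
      · simpa using pow_ne_zero 2 hD0
    have h0 : g1 0 = κ ^ 2 / (κ - U_N) ^ 2 := by simp [hg1]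
    rw [← h0]
    exact this.continuousWithinAt.tendsto
  have hc2 : Tendsto g2 (nhdsWithin 0 (Set.Ioo 0 κ⁻¹)) (nhds (U_N / (κ - U_N))) := by
    have : ContinuousAt g2 0 := by
      apply ContinuousAt.div
      · exact ContinuousAt.mul ((Real.continuous_sqrt.continuousAt).comp (by fun_prop)) continuousAt_const
      · fun_prop
      · simpa using hD0
    have h0 : g2 0 = U_N / (κ - U_N) := by simp [hg2]
    rw [← h0]
    exact this.continuousWithinAt.tendsto
  exact ⟨hc1.congr' (eventuallyEq_nhdsWithin_of_eqOn heq1).symm,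
         hc2.congr' (eventuallyEq_nhdsWithin_of_eqOn heq2).symm⟩
end
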